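/- arXiv:1406.3813 — 2 statements merged into one kernel-verified Lean document; each statement's English description precedes it below -/
import Mathlib

section
/- Let M be a CS-Rickart right R-module and S = End(M). Then: (1) for any idempotents e, f ∈ S there exists an idempotent g ∈ S such that eM ∩ fM is essential in gM; (2) if A is essential in eM and B is essential in fM for idempotents e, f ∈ S, then there exists an idempotent g ∈ S with A ∩ B essential in gM; (3) for any φ₁, …, φₙ ∈ S there exists an idempotent e ∈ S such that ∩_{1≤i≤n} ker φᵢ is essential in eM; (4) M is an SIP-CS module. -/
namespace CSRickartPaper

section Defs

variable {R : Type*} [Ring R] {M : Type*} [AddCommGroup M] [Module R M]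

/-- `N` is an essential submodule of `P` (inside the ambient module `M`):
`N ≤ P` and every submodule of `P` intersecting `N` trivially is zero. -/
def EssentialIn (N P : Submodule R M) : Prop :=
  N ≤ P ∧ ∀ K : Submodule R M, K ≤ P → N ⊓ K = ⊥ → K = ⊥

/-- `N` is a small (superfluous) submodule of `P`. -/
def SmallIn (N P : Submodule R M) : Prop :=
  N ≤ P ∧ ∀ K : Submodule R M, K ≤ P → N ⊔ K = P → K = P

/-- `N` is a direct summand of `M`. -/
def IsDirectSummand (N : Submodule R M) : Prop :=
  ∃ K : Submodule R M, IsCompl N K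

/-- `N` lies above the direct summand `D` of `M`: `M = D ⊕ K`, `D ≤ N` and
`N ⊓ K` is small in `K`. -/
def LiesAbove (N D : Submodule R M) : Prop :=
  ∃ K : Submodule R M, IsCompl D K ∧ D ≤ N ∧ SmallIn (N ⊓ K) K

/-- `N` lies above a direct summand of `M`. -/
def LiesAboveSummand (N : Submodule R M) : Prop :=
  ∃ D : Submodule R M, LiesAbove N D

end Defs

section ModuleDefs

variable (R : Type*) [Ring R] (M : Type*) [AddCommGroup M] [Module R M]

/-- `M` is a CS-Rickart module: the kernel of every endomorphism is essential
in a direct summand `eM`, `e` an idempotent endomorphism. -/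
def IsCSRickart : Prop :=
  ∀ φ : Module.End R M, ∃ e : Module.End R M, IsIdempotentElem e ∧
    EssentialIn (LinearMap.ker φ) (LinearMap.range e)

/-- `M` is a d-CS-Rickart module: the image of every endomorphism lies above a
direct summand of `M`. -/
def IsDCSRickart : Prop :=
  ∀ φ : Module.End R M, LiesAboveSummand (LinearMap.range φ)

/-- `M` is a Rickart module. -/
def IsRickart : Prop :=
  ∀ φ : Module.End R M, ∃ e : Module.End R M, IsIdempotentElem e ∧
    LinearMap.ker φ = LinearMap.range e

/-- `M` is a dual Rickart module. -/
def IsDRickart : Prop :=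
  ∀ φ : Module.End R M, ∃ e : Module.End R M, IsIdempotentElem e ∧
    LinearMap.range φ = LinearMap.range e

/-- `M` is a CS (extending) module. -/
def IsCSModule : Prop :=
  ∀ N : Submodule R M, ∃ D : Submodule R M, IsDirectSummand D ∧ EssentialIn N D

/-- `M` is a lifting (d-CS) module. -/
def IsLifting : Prop :=
  ∀ N : Submodule R M, LiesAboveSummand N

/-- `M` is a singular module: the annihilator of every element is an essential
ideal of `R`. -/
def IsSingularModule : Prop :=
  ∀ m : M, EssentialIn (LinearMap.ker (LinearMap.toSpanSingleton R M m)) (⊤ : Submodule R R)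

/-- `M` is uniform: every nonzero submodule is essential. -/
def IsUniformModule : Prop :=
  ∀ N : Submodule R M, N ≠ ⊥ → EssentialIn N (⊤ : Submodule R M)

/-- `M` satisfies the C₂ condition: every submodule isomorphic to a direct
summand is itself a direct summand. -/
def IsC2 : Prop :=
  ∀ N D : Submodule R M, IsDirectSummand D → Nonempty (N ≃ₗ[R] D) → IsDirectSummand N

/-- `M` is K-nonsingular. -/
def IsKNonsingular : Prop :=
  ∀ φ : Module.End R M, ∀ N : Submodule R M, EssentialIn N (⊤ : Submodule R M) →
    N ≤ LinearMap.ker φ → φ = 0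

/-- `M` is T-noncosingular. -/
def IsTNoncosingular : Prop :=
  ∀ φ : Module.End R M, φ ≠ 0 → ¬ SmallIn (LinearMap.range φ) (⊤ : Submodule R M)

/-- `M` is an SIP-CS module. -/
def IsSIPCS : Prop :=
  ∀ A B : Submodule R M, IsDirectSummand A → IsDirectSummand B →
    ∃ D : Submodule R M, IsDirectSummand D ∧ EssentialIn (A ⊓ B) D

/-- `M` is an SSP-d-CS module. -/
def IsSSPdCS : Prop :=
  ∀ A B : Submodule R M, IsDirectSummand A → IsDirectSummand B →
    LiesAboveSummand (A ⊔ B)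

end ModuleDefs

section RelDefs

variable (R : Type*) [Ring R] (M N : Type*) [AddCommGroup M] [Module R M]
  [AddCommGroup N] [Module R N]

/-- `M` is relatively CS-Rickart to `N`. -/
def IsRelCSRickart : Prop :=
  ∀ φ : M →ₗ[R] N, ∃ e : Module.End R M, IsIdempotentElem e ∧
    EssentialIn (LinearMap.ker φ) (LinearMap.range e)

/-- `M` is relatively d-CS-Rickart to `N`. -/
def IsRelDCSRickart : Prop :=
  ∀ φ : M →ₗ[R] N, LiesAboveSummand (LinearMap.range φ)

/-- `N` is `M`-injective. -/
def IsRelInjective : Prop :=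
  ∀ (A : Submodule R M) (f : A →ₗ[R] N), ∃ g : M →ₗ[R] N, ∀ a : A, g a = f a

end RelDefs

section RingDefs

variable (R : Type*) [Ring R]

/-- The annihilator of an element `a` of `R`, as an ideal (kernel of `r ↦ r • a`). -/
def annElem (a : R) : Submodule R R :=
  LinearMap.ker (LinearMap.toSpanSingleton R R a)

/-- The annihilator of a subset `X` of `R`. -/
def annSet (X : Set R) : Submodule R R :=
  ⨅ x ∈ X, annElem R x

/-- The principal ideal generated by `e`, i.e. the image of `r ↦ r • e`. -/
def idealGen (e : R) : Submodule R R :=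
  LinearMap.range (LinearMap.toSpanSingleton R R e)

/-- `R` is an ACS ring: the annihilator of every element is essential in a
direct summand `eR` of `R`. -/
def IsACSRing : Prop :=
  ∀ a : R, ∃ e : R, IsIdempotentElem e ∧ EssentialIn (annElem R a) (idealGen R e)

/-- `R` is an essentially Baer ring. -/
def IsEssentiallyBaer : Prop :=
  ∀ X : Set R, X.Nonempty → ∃ e : R, IsIdempotentElem e ∧
    EssentialIn (annSet R X) (idealGen R e)

/-- The Jacobson radical of the ring `R`. -/
noncomputable def jacRad : Ideal R := Ideal.jacobson (⊥ : Ideal R)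

/-- `R` is semiregular: `R/J(R)` is von Neumann regular and idempotents lift
modulo `J(R)` (stated elementwise). -/
def IsSemiregularRing : Prop :=
  (∀ a : R, ∃ b : R, a - a * b * a ∈ jacRad R) ∧
  (∀ a : R, a - a * a ∈ jacRad R →
    ∃ e : R, IsIdempotentElem e ∧ e - a ∈ jacRad R)

/-- `J(R)` coincides with the singular ideal `Z(R)`. -/
def JacEqSingular : Prop :=
  ∀ a : R, a ∈ jacRad R ↔ EssentialIn (annElem R a) (⊤ : Submodule R R)

end RingDefs

section GenDefs

variable {R : Type*} [Ring R] {M : Type*} [AddCommGroup M] [Module R M]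

/-- A submodule is `n`-generated if it is spanned by at most `n` elements. -/
def NGen (n : ℕ) (N : Submodule R M) : Prop :=
  ∃ f : Fin n → M, Submodule.span R (Set.range f) = N

end GenDefs

end CSRickartPaper

namespace CSRickartPaper

theorem _root_.IsCompl.inf_sup_of_le {α : Type*} [Lattice α] [BoundedOrder α] [IsModularLattice α]
    {a a' b b' : α} (ha : IsCompl a a') (hb : IsCompl b b') (h : a' ≤ b) :
    IsCompl (a ⊓ b) (a' ⊔ b') := by
  have hb_inf : b ⊓ (a' ⊔ b') = a' := by
    rw [inf_comm, sup_inf_assoc_of_le b' h, inf_comm b' b, hb.inf_eq_bot, sup_bot_eq]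
  have hb_sup : a ⊓ b ⊔ a' = b := by
    rw [sup_comm, ← sup_inf_assoc_of_le a h, ha.symm.sup_eq_top, top_inf_eq]
  constructor
  · rw [disjoint_iff, inf_assoc, hb_inf, ha.inf_eq_bot]
  · rw [codisjoint_iff, ← sup_assoc, hb_sup, hb.sup_eq_top]

section Essential

variable {R : Type*} [Ring R] {M : Type*} [AddCommGroup M] [Module R M]

theorem essentialIn_refl (N : Submodule R M) : EssentialIn N N :=
  ⟨le_rfl, fun K hK hNK => by rwa [inf_eq_right.2 hK] at hNK⟩

theorem EssentialIn.trans {N P Q : Submodule R M} (hNP : EssentialIn N P)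
    (hPQ : EssentialIn P Q) : EssentialIn N Q := by
  refine ⟨hNP.1.trans hPQ.1, fun K hK hNK => hPQ.2 K hK (hNP.2 (P ⊓ K) inf_le_left ?_)⟩
  rw [← inf_assoc, inf_eq_left.2 hNP.1, hNK]

theorem EssentialIn.inf {A P B Q : Submodule R M} (hA : EssentialIn A P)
    (hB : EssentialIn B Q) : EssentialIn (A ⊓ B) (P ⊓ Q) := by
  refine ⟨inf_le_inf hA.1 hB.1, fun K hK hABK => hA.2 K (hK.trans inf_le_left) ?_⟩
  refine hB.2 (A ⊓ K) (inf_le_right.trans (hK.trans inf_le_right)) ?_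
  rw [inf_left_comm, ← inf_assoc, hABK]

end Essential

section DirectSummand

variable {R : Type*} [Ring R] {M : Type*} [AddCommGroup M] [Module R M]

theorem isDirectSummand_range {e : Module.End R M} (he : IsIdempotentElem e) :
    IsDirectSummand (LinearMap.range e) :=
  ⟨_, LinearMap.IsIdempotentElem.isCompl he⟩

theorem IsDirectSummand.exists_isIdempotentElem_range_eq {N : Submodule R M}
    (hN : IsDirectSummand N) : ∃ e : Module.End R M, IsIdempotentElem e ∧ LinearMap.range e = N :=
  let ⟨_, h⟩ := hN
  ⟨N.projection _ h, Submodule.isIdempotentElem_projection h, Submodule.range_projection h⟩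

theorem IsDirectSummand.exists_ker_eq {N : Submodule R M} (hN : IsDirectSummand N) :
    ∃ φ : Module.End R M, LinearMap.ker φ = N :=
  let ⟨N', h⟩ := hN
  ⟨N'.projection N h.symm, Submodule.ker_projection h.symm⟩

theorem exists_isIdempotentElem_essentialIn_range_iff {N : Submodule R M} :
    (∃ e : Module.End R M, IsIdempotentElem e ∧ EssentialIn N (LinearMap.range e)) ↔
      ∃ D : Submodule R M, IsDirectSummand D ∧ EssentialIn N D := by
  constructor
  · rintro ⟨e, he, hN⟩
    exact ⟨_, isDirectSummand_range he, hN⟩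
  · rintro ⟨D, hD, hN⟩
    obtain ⟨e, he, rfl⟩ := hD.exists_isIdempotentElem_range_eq
    exact ⟨e, he, hN⟩

end DirectSummand

namespace IsCSRickart

variable {R : Type*} [Ring R] {M : Type*} [AddCommGroup M] [Module R M]

theorem exists_essentialIn_ker (h : IsCSRickart R M) (φ : Module.End R M) :
    ∃ D : Submodule R M, IsDirectSummand D ∧ EssentialIn (LinearMap.ker φ) D :=
  exists_isIdempotentElem_essentialIn_range_iff.1 (h φ)

/-- With `p` the projection onto `E` along `E'` and `F = ker ψ`, the kernel `K` of `ψ ∘ p`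
contains `E'` and meets `E` in `E ⊓ F`; if `K` is essential in the summand `G`, then `E ⊓ F`
is essential in `E ⊓ G`, a summand with complement `E' ⊕ G'`. -/
theorem exists_essentialIn_inf (h : IsCSRickart R M) {E F : Submodule R M}
    (hE : IsDirectSummand E) (hF : IsDirectSummand F) :
    ∃ D : Submodule R M, IsDirectSummand D ∧ EssentialIn (E ⊓ F) D := by
  obtain ⟨E', hEE'⟩ := hE
  obtain ⟨ψ, rfl⟩ := hF.exists_ker_eq
  set p := E.projection E' hEE'
  obtain ⟨G, ⟨G', hGG'⟩, hKG⟩ := h.exists_essentialIn_ker (ψ ∘ₗ p)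
  have hE'K : E' ≤ LinearMap.ker (ψ ∘ₗ p) := fun x hx => by
    simp [p, Submodule.projection_apply_of_mem_right hEE' hx]
  have hEK : E ⊓ LinearMap.ker (ψ ∘ₗ p) = E ⊓ LinearMap.ker ψ := by
    ext x
    simp only [Submodule.mem_inf, LinearMap.mem_ker, LinearMap.comp_apply, and_congr_right_iff]
    intro hx
    simp only [p, Submodule.projection_apply_of_mem_left hEE' hx]
  refine ⟨E ⊓ G, ⟨_, hEE'.inf_sup_of_le hGG' (hE'K.trans hKG.1)⟩, ?_⟩
  rw [← hEK]
  exact (essentialIn_refl E).inf hKG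

theorem exists_essentialIn_inf_of_essentialIn (h : IsCSRickart R M) {A B E F : Submodule R M}
    (hE : IsDirectSummand E) (hF : IsDirectSummand F) (hA : EssentialIn A E)
    (hB : EssentialIn B F) : ∃ D : Submodule R M, IsDirectSummand D ∧ EssentialIn (A ⊓ B) D :=
  let ⟨D, hD, hEF⟩ := h.exists_essentialIn_inf hE hF
  ⟨D, hD, (hA.inf hB).trans hEF⟩

theorem exists_essentialIn_iInf_ker (h : IsCSRickart R M) {ι : Type*} [Finite ι]
    (φ : ι → Module.End R M) :
    ∃ D : Submodule R M, IsDirectSummand D ∧ EssentialIn (⨅ i, LinearMap.ker (φ i)) D := by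
  classical
  have : Fintype ι := Fintype.ofFinite ι
  rw [← Finset.inf_univ_eq_iInf]
  induction (Finset.univ : Finset ι) using Finset.induction_on with
  | empty => exact ⟨⊤, ⟨⊥, isCompl_top_bot⟩, essentialIn_refl ⊤⟩
  | insert i s _ ih =>
    obtain ⟨E, hE, hkerE⟩ := h.exists_essentialIn_ker (φ i)
    obtain ⟨F, hF, hsF⟩ := ih
    rw [Finset.inf_insert]
    exact h.exists_essentialIn_inf_of_essentialIn hE hF hkerE hsF

end IsCSRickart

/-- Properties of CS-Rickart modules: intersections of direct summands are
essential in direct summands, finite intersections of kernels are essential in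
direct summands, and `M` has the SIP-CS property. -/
theorem csRickart_sipCS
    {R : Type*} [Ring R] {M : Type*} [AddCommGroup M] [Module R M]
    (h : IsCSRickart R M) :
    (∀ e f : Module.End R M, IsIdempotentElem e → IsIdempotentElem f →
      ∃ g : Module.End R M, IsIdempotentElem g ∧
        EssentialIn (LinearMap.range e ⊓ LinearMap.range f) (LinearMap.range g)) ∧
    (∀ (e f : Module.End R M) (A B : Submodule R M),
      IsIdempotentElem e → IsIdempotentElem f →
      EssentialIn A (LinearMap.range e) → EssentialIn B (LinearMap.range f) →
      ∃ g : Module.End R M, IsIdempotentElem g ∧ EssentialIn (A ⊓ B) (LinearMap.range g)) ∧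
    (∀ (n : ℕ) (φ : Fin n → Module.End R M),
      ∃ e : Module.End R M, IsIdempotentElem e ∧
        EssentialIn (⨅ i, LinearMap.ker (φ i)) (LinearMap.range e)) ∧
    IsSIPCS R M := by
  simp only [exists_isIdempotentElem_essentialIn_range_iff]
  refine ⟨fun e f he hf => ?_, fun e f A B he hf hA hB => ?_,
    fun n φ => h.exists_essentialIn_iInf_ker φ, fun A B hA hB => h.exists_essentialIn_inf hA hB⟩
  · exact h.exists_essentialIn_inf (isDirectSummand_range he) (isDirectSummand_range hf)
  · exact h.exists_essentialIn_inf_of_essentialIn (isDirectSummand_range he)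
      (isDirectSummand_range hf) hA hB

end CSRickartPaper
end

section
/- Let P be a projective right R-module and N a submodule of P. Then N is an essential submodule of P if and only if the quotient P/N is a singular module. Consequently, every nonzero projective right R-module is not singular. -/
/-!
Preimages of essential submodules are essential; applied to `r ↦ r • x` this shows that `P/N` is
singular whenever `N` is essential, in any module. Conversely, write `P` as a retract
`π ∘ s = id` of the free module `F = R^(P)`. Singularity of `P/N` says that `π⁻¹ N` meets each
coordinate line `R eₚ` in an essential submodule; finite direct sums of essential submodules are
essential, so `π⁻¹ N` is essential in `F`, hence `N = s⁻¹ (π⁻¹ N)` is essential in `P`. For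
`N = 0` this says that a singular projective module is zero.
-/

namespace CSRickartPaper

section Essential

variable {R : Type*} [Ring R] {M : Type*} [AddCommGroup M] [Module R M]
  {M' : Type*} [AddCommGroup M'] [Module R M']

theorem essentialIn_iff {N P : Submodule R M} :
    EssentialIn N P ↔ N ≤ P ∧ ∀ x ∈ P, x ≠ 0 → ∃ r : R, r • x ∈ N ∧ r • x ≠ 0 := by
  refine and_congr_right fun _ => ⟨fun h x hxP hx => ?_, fun h K hKP hNK => ?_⟩
  · by_contra! hc
    have hx_bot : Submodule.span R {x} = ⊥ :=
      h _ ((Submodule.span_singleton_le_iff_mem _ _).2 hxP) <| by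
        rw [Submodule.eq_bot_iff]
        rintro y ⟨hyN, hyx⟩
        obtain ⟨r, rfl⟩ := Submodule.mem_span_singleton.1 hyx
        exact hc r hyN
    exact hx (Submodule.span_singleton_eq_bot.1 hx_bot)
  · rw [Submodule.eq_bot_iff]
    intro x hxK
    by_contra hx
    obtain ⟨r, hrN, hr⟩ := h x (hKP hxK) hx
    exact hr ((Submodule.eq_bot_iff _).1 hNK _ ⟨hrN, K.smul_mem r hxK⟩)

theorem EssentialIn.mono {N N' P : Submodule R M} (h : EssentialIn N P) (hNN' : N ≤ N')
    (hN'P : N' ≤ P) : EssentialIn N' P :=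
  ⟨hN'P, fun K hKP hK => h.2 K hKP (eq_bot_mono (inf_le_inf_right K hNN') hK)⟩

theorem EssentialIn.sup {N₁ N₂ A B : Submodule R M} (hA : EssentialIn N₁ A)
    (hB : EssentialIn N₂ B) (hAB : Disjoint A B) : EssentialIn (N₁ ⊔ N₂) (A ⊔ B) := by
  rw [essentialIn_iff] at *
  refine ⟨sup_le_sup hA.1 hB.1, fun x hx hx0 => ?_⟩
  obtain ⟨a, ha, b, hb, rfl⟩ := Submodule.mem_sup.1 hx
  have h_smul_ne_zero {s : R} (hs : s • a ≠ 0 ∨ s • b ≠ 0) : s • (a + b) ≠ 0 := by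
    rw [smul_add]
    intro h0
    have := Submodule.disjoint_iff_add_eq_zero.1 hAB (A.smul_mem s ha) (B.smul_mem s hb) h0
    tauto
  -- First move the `A`-component into `N₁`, then the `B`-component of the result into `N₂`.
  obtain ⟨t, hta, htx⟩ : ∃ t : R, t • a ∈ N₁ ∧ t • (a + b) ≠ 0 := by
    by_cases ha0 : a = 0
    · exact ⟨1, by simp [ha0], by simpa using hx0⟩
    obtain ⟨t, hta, hta0⟩ := hA.2 a ha ha0
    exact ⟨t, hta, h_smul_ne_zero (.inl hta0)⟩
  by_cases htb : t • b = 0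
  · exact ⟨t, by simpa [smul_add, htb] using Submodule.mem_sup_left hta, htx⟩
  obtain ⟨u, hub, hub0⟩ := hB.2 (t • b) (B.smul_mem t hb) htb
  refine ⟨u * t, ?_, h_smul_ne_zero (.inr (by rwa [mul_smul]))⟩
  simp only [mul_smul, smul_add]
  exact Submodule.add_mem_sup (N₁.smul_mem u hta) hub

theorem EssentialIn.map {N P : Submodule R M} (h : EssentialIn N P) {f : M →ₗ[R] M'}
    (hf : Function.Injective f) : EssentialIn (N.map f) (P.map f) := by
  rw [essentialIn_iff] at *
  refine ⟨Submodule.map_mono h.1, ?_⟩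
  rintro _ ⟨x, hx, rfl⟩ hx0
  obtain ⟨r, hr, hr0⟩ := h.2 x hx (by rintro rfl; exact hx0 (map_zero f))
  refine ⟨r, ?_, ?_⟩
  · rw [← map_smul]
    exact Submodule.mem_map_of_mem hr
  · rw [← map_smul]
    exact (map_ne_zero_iff f hf).2 hr0

theorem EssentialIn.comap {N P : Submodule R M'} (h : EssentialIn N P) (f : M →ₗ[R] M') :
    EssentialIn (N.comap f) (P.comap f) := by
  rw [essentialIn_iff] at *
  refine ⟨Submodule.comap_mono h.1, fun x hx hx0 => ?_⟩
  by_cases hfx : f x ∈ N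
  · exact ⟨1, by simpa using hfx, by simpa using hx0⟩
  obtain ⟨r, hr, hr0⟩ := h.2 (f x) hx fun h0 => hfx (h0 ▸ N.zero_mem)
  exact ⟨r, by simpa using hr, fun h0 => hr0 (by rw [← map_smul, h0, map_zero])⟩

end Essential

section Projective

variable {R : Type*} [Ring R] {M : Type*} [AddCommGroup M] [Module R M]

theorem essentialIn_top_of_forall_single {ι : Type*} {N : Submodule R (ι →₀ R)}
    (h : ∀ i, EssentialIn (N.comap (LinearMap.toSpanSingleton R _ (Finsupp.single i 1))) ⊤) :
    EssentialIn N ⊤ := by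
  classical
  have h_single (i : ι) :
      EssentialIn (N ⊓ Finsupp.supported R R {i}) (Finsupp.supported R R {i}) := by
    have h_range : (⊤ : Submodule R R).map (Finsupp.lsingle i) = Finsupp.supported R R {i} := by
      ext f
      rw [Submodule.map_top, LinearMap.mem_range, Finsupp.mem_supported, ← Finset.coe_singleton,
        Finset.coe_subset, Finsupp.support_subset_singleton']
      exact exists_congr fun _ => eq_comm
    rw [← h_range]
    refine ((h i).map (Finsupp.single_injective i)).mono
      (le_inf ?_ (Submodule.map_mono le_top)) inf_le_right
    rintro _ ⟨r, hr, rfl⟩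
    simpa [Finsupp.smul_single_one] using hr
  have h_finset (S : Finset ι) :
      EssentialIn (N ⊓ Finsupp.supported R R ↑S) (Finsupp.supported R R ↑S) := by
    induction S using Finset.induction_on with
    | empty => exact ⟨inf_le_right, fun K hK _ => by simpa using hK⟩
    | insert i S hi ih =>
      rw [Finset.coe_insert, Set.insert_eq, Finsupp.supported_union]
      refine ((h_single i).sup ih (Finsupp.disjoint_supported_supported (by simpa using hi))).mono
        (sup_le (inf_le_inf_left _ le_sup_left) (inf_le_inf_left _ le_sup_right)) inf_le_right
  refine essentialIn_iff.2 ⟨le_top, fun x _ hx0 => ?_⟩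
  obtain ⟨r, hr, hr0⟩ :=
    (essentialIn_iff.1 (h_finset x.support)).2 x (Finsupp.mem_supported_support R x) hx0
  exact ⟨r, hr.1, hr0⟩

theorem essentialIn_top_of_projective [Module.Projective R M] {N : Submodule R M}
    (h : ∀ x : M, EssentialIn (N.comap (LinearMap.toSpanSingleton R M x)) ⊤) :
    EssentialIn N ⊤ := by
  obtain ⟨s, hs⟩ := Module.projective_def'.1 ‹Module.Projective R M›
  have h_free : EssentialIn (N.comap (Finsupp.linearCombination R id)) ⊤ :=
    essentialIn_top_of_forall_single fun p => by
      have h_comp : Finsupp.linearCombination R id ∘ₗ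
          LinearMap.toSpanSingleton R _ (Finsupp.single p 1) = LinearMap.toSpanSingleton R M p :=
        LinearMap.ext_ring (by simp)
      rw [← Submodule.comap_comp, h_comp]
      exact h p
  simpa [← Submodule.comap_comp, hs] using h_free.comap s

end Projective

theorem ker_toSpanSingleton_mk {R : Type*} [Ring R] {M : Type*} [AddCommGroup M] [Module R M]
    (N : Submodule R M) (x : M) :
    LinearMap.ker (LinearMap.toSpanSingleton R (M ⧸ N) (Submodule.Quotient.mk x)) =
      N.comap (LinearMap.toSpanSingleton R M x) := by
  ext r
  simp [← Submodule.Quotient.mk_smul, Submodule.Quotient.mk_eq_zero]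

theorem isSingularModule_quotient_iff {R : Type*} [Ring R] {M : Type*} [AddCommGroup M]
    [Module R M] {N : Submodule R M} :
    IsSingularModule R (M ⧸ N) ↔
      ∀ x : M, EssentialIn (N.comap (LinearMap.toSpanSingleton R M x)) ⊤ := by
  simp only [IsSingularModule, (Submodule.Quotient.mk_surjective N).forall, ker_toSpanSingleton_mk]

/-- For a projective module `P` and a submodule `N`, `N` is essential in `P`
iff `P/N` is singular; consequently a nonzero projective module is not singular. -/
theorem essential_iff_quotient_singular
    {R : Type*} [Ring R] {P : Type*} [AddCommGroup P] [Module R P]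
    (hP : Module.Projective R P) (N : Submodule R P) :
    (EssentialIn N (⊤ : Submodule R P) ↔ IsSingularModule R (P ⧸ N)) ∧
    (∀ (Q : Type*) [AddCommGroup Q] [Module R Q],
      Module.Projective R Q → Nontrivial Q → ¬ IsSingularModule R Q) := by
  refine ⟨?_, fun Q _ _ hQ _ hsing => ?_⟩
  · rw [isSingularModule_quotient_iff]
    exact ⟨fun h x => by simpa using h.comap (LinearMap.toSpanSingleton R P x),
      essentialIn_top_of_projective⟩
  · have h_bot : EssentialIn (⊥ : Submodule R Q) ⊤ := essentialIn_top_of_projective hsing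
    exact top_ne_bot (h_bot.2 ⊤ le_rfl (bot_inf_eq ⊤))

end CSRickartPaper
end
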